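/- For the TRIP-Stern sequence for (e,12,12), the minimal terms lie on the left-most path of the tree and all have value 1: for every n, every entry of every triple Δ(v) with v ∈ {0,1}ⁿ is at least 1, and the second entry of the left-most triple f₀ⁿ(1,1,1) equals 1, so the minimum entry of level n equals 1. -/

import Mathlib

/-- `f₀(a,b,c) = (c,b,a+c)` for the triplet `(e,12,12)`. -/
def f0 (p : ℤ × ℤ × ℤ) : ℤ × ℤ × ℤ := (p.2.2, p.2.1, p.1 + p.2.2)

/-- `f₁(a,b,c) = (b,a,a+c)` for the triplet `(e,12,12)`. -/
def f1 (p : ℤ × ℤ × ℤ) : ℤ × ℤ × ℤ := (p.2.1, p.1, p.1 + p.2.2)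

/-- One step of the TRIP-Stern tree: apply `f₁` on a `true` and `f₀` on a `false`. -/
def step (p : ℤ × ℤ × ℤ) (i : Bool) : ℤ × ℤ × ℤ := if i then f1 p else f0 p

/-- `Δ(v) = f_{iₙ}(⋯ f_{i₁}(1,1,1) ⋯)`, applying `f_{i₁}` first. -/
def delta (v : List Bool) : ℤ × ℤ × ℤ := v.foldl step (1, 1, 1)

/-- The minimum coordinate of a triple. -/
def minEntry (p : ℤ × ℤ × ℤ) : ℤ := min p.1 (min p.2.1 p.2.2)

/-!
Both `f₀` and `f₁` permute the entries of a triple and replace one of them by a sum of two, so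
entries `≥ 1` stay `≥ 1` along the whole tree. On the left-most path only `f₀` is applied, and
`f₀` fixes the middle entry, which therefore stays `1`; hence it realises the minimum of each level.
-/

theorem one_le_minEntry_iff {p : ℤ × ℤ × ℤ} :
    1 ≤ minEntry p ↔ 1 ≤ p.1 ∧ 1 ≤ p.2.1 ∧ 1 ≤ p.2.2 := by
  simp only [minEntry, le_min_iff]

theorem one_le_minEntry_step {p : ℤ × ℤ × ℤ} (hp : 1 ≤ minEntry p) (i : Bool) :
    1 ≤ minEntry (step p i) := by
  rw [one_le_minEntry_iff] at hp ⊢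
  cases i <;> simp only [step, f0, f1, Bool.false_eq_true, if_false, if_true] <;> omega

theorem one_le_minEntry_foldl_step (l : List Bool) {p : ℤ × ℤ × ℤ} (hp : 1 ≤ minEntry p) :
    1 ≤ minEntry (l.foldl step p) := by
  induction l generalizing p with
  | nil => exact hp
  | cons i l ih => exact ih (one_le_minEntry_step hp i)

theorem one_le_minEntry_delta (v : List Bool) : 1 ≤ minEntry (delta v) :=
  one_le_minEntry_foldl_step v (by decide)

theorem foldl_step_replicate_false (n : ℕ) (p : ℤ × ℤ × ℤ) :
    (List.replicate n false).foldl step p = f0^[n] p := by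
  induction n generalizing p with
  | zero => rfl
  | succ n ih => exact ih (f0 p)

theorem delta_replicate_false (n : ℕ) : delta (List.replicate n false) = f0^[n] (1, 1, 1) :=
  foldl_step_replicate_false n _

theorem f0_iterate_snd_fst (n : ℕ) (p : ℤ × ℤ × ℤ) : (f0^[n] p).2.1 = p.2.1 :=
  congrFun (Function.iterate_invariant (f := f0) (g := fun p => p.2.1) rfl n) p

/-- For the TRIP-Stern sequence for `(e,12,12)`, the minimal terms lie on the left-most
path and all have value `1`: every entry of every level-`n` triple `Δ(v)` is at least
`1`, the second entry of the left-most triple `f₀ⁿ(1,1,1)` equals `1`, and the minimum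
entry of each level equals `1`. -/
theorem minTerms_leftmost_e1212 :
    (∀ (n : ℕ) (v : Fin n → Bool),
      1 ≤ (delta (List.ofFn v)).1 ∧
      1 ≤ (delta (List.ofFn v)).2.1 ∧
      1 ≤ (delta (List.ofFn v)).2.2) ∧
    (∀ n : ℕ, (f0^[n] (1, 1, 1)).2.1 = 1) ∧
    (∀ n : ℕ,
      Finset.inf' Finset.univ Finset.univ_nonempty
        (fun v : Fin n → Bool => minEntry (delta (List.ofFn v))) = 1) := by
  have leftmost_snd (n : ℕ) : (f0^[n] (1, 1, 1)).2.1 = 1 := f0_iterate_snd_fst n _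
  refine ⟨fun n v => one_le_minEntry_iff.mp (one_le_minEntry_delta _), leftmost_snd, fun n => ?_⟩
  refine le_antisymm ?_ (Finset.le_inf' _ _ fun v _ => one_le_minEntry_delta _)
  calc Finset.univ.inf' Finset.univ_nonempty (fun v : Fin n → Bool => minEntry (delta (List.ofFn v)))
      ≤ minEntry (delta (List.ofFn fun _ : Fin n => false)) := Finset.inf'_le _ (Finset.mem_univ _)
    _ ≤ (f0^[n] (1, 1, 1)).2.1 := by
        rw [List.ofFn_const, delta_replicate_false]
        exact (min_le_right _ _).trans (min_le_left _ _)
    _ = 1 := leftmost_snd n
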